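/- arXiv:1609.07637 — 2 statements merged into one kernel-verified Lean document; each statement's English description precedes it below -/
import Mathlib

section
/- If there exists i such that π_{ij} = 0 for all j ≠ i (with π_{ii} > 0), then the i-th coordinate of the Σ-expectile e_α^Σ(X) equals the univariate expectile e_α(X_i). -/
/-!
When row `i` of the symmetric matrix `S` vanishes off the diagonal, the Σ-score separates:
moving the `i`-th coordinate of `x` to `t` changes it by `S i i` times the change of the
univariate score `φ t = E[α (X_i - t)₊² + (1 - α) (t - X_i)₊²]`, so `e i` minimises `φ`.
The loss `t ↦ α (y - t)₊² + (1 - α) (t - y)₊²` is strongly convex with modulus `min α (1 - α)`,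
and the expectile equation for `ei` says exactly that `φ' ei = 0`; hence
`φ t ≥ φ ei + min α (1 - α) (t - ei)²`, and `t = e i` forces `e i = ei`.
-/

open MeasureTheory Matrix Function

section QuadraticForm

variable {n R : Type*} [Fintype n] [DecidableEq n] [CommRing R] {S : Matrix n n R} {i : n}

theorem mulVec_apply_eq_zero_of_row (hrow : ∀ j ≠ i, S i j = 0) {v : n → R} (hv : v i = 0) :
    (S *ᵥ v) i = 0 := by
  refine Finset.sum_eq_zero fun j _ => ?_
  by_cases hj : j = i
  · simp [hj, hv]
  · simp [hrow j hj]

theorem dotProduct_mulVec_eq_diag_add_update_zero (hS : S.IsSymm) (hrow : ∀ j ≠ i, S i j = 0)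
    (u : n → R) : u ⬝ᵥ S *ᵥ u = S i i * u i ^ 2 + update u i 0 ⬝ᵥ S *ᵥ update u i 0 := by
  set v := update u i 0
  have hu : u = v + Pi.single i (u i) := by
    ext k
    by_cases hk : k = i
    · subst hk; simp [v]
    · simp [v, hk]
  have hSv : (S *ᵥ v) i = 0 := mulVec_apply_eq_zero_of_row hrow (update_self i 0 u)
  have hcross : v ⬝ᵥ S *ᵥ Pi.single i (u i) = 0 := by
    rw [dotProduct_mulVec, ← mulVec_transpose, hS.eq, dotProduct_single, hSv, zero_mul]
  conv_lhs => rw [hu]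
  rw [mulVec_add, add_dotProduct, dotProduct_add, dotProduct_add, hcross, single_dotProduct,
    single_dotProduct, hSv, mulVec_single]
  simp only [Pi.smul_apply, col_apply, MulOpposite.smul_eq_mul_unop, MulOpposite.unop_op]
  ring

end QuadraticForm

section Loss

def expectileLoss (α y t : ℝ) : ℝ := α * max (y - t) 0 ^ 2 + (1 - α) * max (t - y) 0 ^ 2

def sigmaExpectileLoss {n : Type*} [Fintype n] (S : Matrix n n ℝ) (α : ℝ) (y x : n → ℝ) : ℝ :=
  α * ((fun k => max (y k - x k) 0) ⬝ᵥ S *ᵥ fun k => max (y k - x k) 0)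
    + (1 - α) * ((fun k => max (x k - y k) 0) ⬝ᵥ S *ᵥ fun k => max (x k - y k) 0)

theorem expectileLoss_tangent_add_sq_le {α m : ℝ} (hmα : m ≤ α) (hm1 : m ≤ 1 - α) (y e t : ℝ) :
    expectileLoss α y e - 2 * (α * max (y - e) 0 - (1 - α) * max (e - y) 0) * (t - e)
      + m * (t - e) ^ 2 ≤ expectileLoss α y t := by
  unfold expectileLoss
  rcases le_total y e with hye | hey <;> rcases le_total y t with hyt | hty
  · rw [max_eq_right (sub_nonpos.2 hye), max_eq_left (sub_nonneg.2 hye),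
      max_eq_right (sub_nonpos.2 hyt), max_eq_left (sub_nonneg.2 hyt)]
    nlinarith [sq_nonneg (t - e)]
  · rw [max_eq_right (sub_nonpos.2 hye), max_eq_left (sub_nonneg.2 hye),
      max_eq_left (sub_nonneg.2 hty), max_eq_right (sub_nonpos.2 hty)]
    nlinarith [sq_nonneg (y - t), sq_nonneg (e - y),
      mul_nonneg (sub_nonneg.2 hye) (sub_nonneg.2 hty)]
  · rw [max_eq_left (sub_nonneg.2 hey), max_eq_right (sub_nonpos.2 hey),
      max_eq_right (sub_nonpos.2 hyt), max_eq_left (sub_nonneg.2 hyt)]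
    nlinarith [sq_nonneg (t - y), sq_nonneg (y - e),
      mul_nonneg (sub_nonneg.2 hey) (sub_nonneg.2 hyt)]
  · rw [max_eq_left (sub_nonneg.2 hey), max_eq_right (sub_nonpos.2 hey),
      max_eq_left (sub_nonneg.2 hty), max_eq_right (sub_nonpos.2 hty)]
    nlinarith [sq_nonneg (t - e)]

theorem sigmaExpectileLoss_eq_diag_add_update {n : Type*} [Fintype n] [DecidableEq n]
    {S : Matrix n n ℝ} {i : n} (hS : S.IsSymm) (hrow : ∀ j ≠ i, S i j = 0) (α : ℝ)
    (y x : n → ℝ) :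
    sigmaExpectileLoss S α y x
      = S i i * expectileLoss α (y i) (x i) + sigmaExpectileLoss S α y (update x i (y i)) := by
  have hupdate : ∀ f : ℝ → ℝ → ℝ, (∀ a, f a a = 0) →
      (fun k => f (y k) (update x i (y i) k)) = update (fun k => f (y k) (x k)) i 0 := by
    intro f hf
    ext k
    by_cases hk : k = i
    · subst hk; simp [hf]
    · simp [hk]
  unfold sigmaExpectileLoss expectileLoss
  rw [dotProduct_mulVec_eq_diag_add_update_zero hS hrow (fun k => max (y k - x k) 0),
    dotProduct_mulVec_eq_diag_add_update_zero hS hrow (fun k => max (x k - y k) 0),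
    hupdate (fun a b => max (a - b) 0) (by simp), hupdate (fun a b => max (b - a) 0) (by simp)]
  ring

theorem sigmaExpectileLoss_update {n : Type*} [Fintype n] [DecidableEq n]
    {S : Matrix n n ℝ} {i : n} (hS : S.IsSymm) (hrow : ∀ j ≠ i, S i j = 0) (α : ℝ)
    (y x : n → ℝ) (t : ℝ) :
    sigmaExpectileLoss S α y (update x i t) = sigmaExpectileLoss S α y x
      + S i i * (expectileLoss α (y i) t - expectileLoss α (y i) (x i)) := by
  rw [sigmaExpectileLoss_eq_diag_add_update hS hrow α y x,
    sigmaExpectileLoss_eq_diag_add_update hS hrow α y (update x i t), update_idem, update_self]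
  ring

end Loss

section Integrals

variable {Ω : Type*} [MeasurableSpace Ω] {μ : Measure Ω}

theorem memLp_two_of_integrable_abs_mul_self {f : Ω → ℝ} (hf : AEStronglyMeasurable f μ)
    (hint : Integrable (fun ω => |f ω * f ω|) μ) : MemLp f 2 μ :=
  (memLp_two_iff_integrable_sq hf).2 <| hint.congr <| .of_forall fun ω => by
    simp only [abs_mul_self, sq]

theorem integrable_dotProduct_mulVec {n : Type*} [Fintype n] (S : Matrix n n ℝ)
    {f : Ω → n → ℝ} (hf : ∀ k, MemLp (fun ω => f ω k) 2 μ) :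
    Integrable (fun ω => f ω ⬝ᵥ S *ᵥ f ω) μ := by
  simp only [dotProduct, mulVec, Finset.mul_sum]
  refine integrable_finsetSum _ fun j _ => integrable_finsetSum _ fun k _ => ?_
  exact (hf j).integrable_mul ((hf k).const_mul (S j k))

theorem integrable_expectileLoss [IsFiniteMeasure μ] {Y : Ω → ℝ} (hY : MemLp Y 2 μ) (α t : ℝ) :
    Integrable (fun ω => expectileLoss α (Y ω) t) μ :=
  ((hY.sub (memLp_const t)).pos_part.integrable_sq.const_mul α).add
    (((memLp_const t).sub hY).pos_part.integrable_sq.const_mul (1 - α))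

theorem integrable_sigmaExpectileLoss [IsFiniteMeasure μ] {n : Type*} [Fintype n]
    (S : Matrix n n ℝ) {X : Ω → n → ℝ} (hX : ∀ k, MemLp (fun ω => X ω k) 2 μ) (α : ℝ) (x : n → ℝ) :
    Integrable (fun ω => sigmaExpectileLoss S α (X ω) x) μ :=
  ((integrable_dotProduct_mulVec S fun k => ((hX k).sub (memLp_const (x k))).pos_part).const_mul
    α).add
    ((integrable_dotProduct_mulVec S fun k => ((memLp_const (x k)).sub (hX k)).pos_part).const_mul
      (1 - α))

theorem integral_sigmaExpectileLoss_update [IsFiniteMeasure μ] {n : Type*} [Fintype n]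
    [DecidableEq n] {S : Matrix n n ℝ} {i : n} (hS : S.IsSymm) (hrow : ∀ j ≠ i, S i j = 0)
    {X : Ω → n → ℝ} (hX : ∀ k, MemLp (fun ω => X ω k) 2 μ) (α : ℝ) (x : n → ℝ) (t : ℝ) :
    ∫ ω, sigmaExpectileLoss S α (X ω) (update x i t) ∂μ
      = ∫ ω, sigmaExpectileLoss S α (X ω) x ∂μ
        + S i i * (∫ ω, expectileLoss α (X ω i) t ∂μ - ∫ ω, expectileLoss α (X ω i) (x i) ∂μ) := by
  have hL := integrable_expectileLoss (hX i) α
  have hdiff : Integrable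
      (fun ω => S i i * (expectileLoss α (X ω i) t - expectileLoss α (X ω i) (x i))) μ :=
    ((hL t).sub (hL (x i))).const_mul _
  simp_rw [sigmaExpectileLoss_update hS hrow]
  rw [integral_add (integrable_sigmaExpectileLoss S hX α x) hdiff, integral_const_mul,
    integral_sub (hL t) (hL (x i))]

theorem integral_expectileLoss_add_sq_le [IsProbabilityMeasure μ] {Y : Ω → ℝ} (hY : MemLp Y 2 μ)
    {α m : ℝ} (hmα : m ≤ α) (hm1 : m ≤ 1 - α) {e : ℝ}
    (he : α * ∫ ω, max (Y ω - e) 0 ∂μ = (1 - α) * ∫ ω, max (e - Y ω) 0 ∂μ) (t : ℝ) :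
    ∫ ω, expectileLoss α (Y ω) e ∂μ + m * (t - e) ^ 2 ≤ ∫ ω, expectileLoss α (Y ω) t ∂μ := by
  have hL := integrable_expectileLoss hY α
  have hpos : Integrable (fun ω => max (Y ω - e) 0) μ :=
    (hY.sub (memLp_const e)).pos_part.integrable one_le_two
  have hneg : Integrable (fun ω => max (e - Y ω) 0) μ :=
    ((memLp_const e).sub hY).pos_part.integrable one_le_two
  set slope : Ω → ℝ := fun ω => 2 * (α * max (Y ω - e) 0 - (1 - α) * max (e - Y ω) 0) * (t - e)
  have hslope : Integrable slope μ :=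
    (((hpos.const_mul α).sub (hneg.const_mul (1 - α))).const_mul 2).mul_const (t - e)
  have hslope_zero : ∫ ω, slope ω ∂μ = 0 := by
    rw [integral_mul_const, integral_const_mul, integral_sub (hpos.const_mul α) (hneg.const_mul _),
      integral_const_mul, integral_const_mul, he, sub_self, mul_zero, zero_mul]
  have htangent : Integrable (fun ω => expectileLoss α (Y ω) e - slope ω) μ := (hL e).sub hslope
  calc ∫ ω, expectileLoss α (Y ω) e ∂μ + m * (t - e) ^ 2
      = ∫ ω, expectileLoss α (Y ω) e - slope ω + m * (t - e) ^ 2 ∂μ := by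
        rw [integral_add htangent (integrable_const _), integral_sub (hL e) hslope, hslope_zero,
          integral_const, probReal_univ, one_smul, sub_zero]
    _ ≤ ∫ ω, expectileLoss α (Y ω) t ∂μ :=
        integral_mono (htangent.add (integrable_const _)) (hL t)
          fun ω => expectileLoss_tangent_add_sq_le hmα hm1 (Y ω) e t

end Integrals

theorem sigma_expectile_independence_coordinate_general
    {Ω : Type*} [MeasurableSpace Ω] (μ : Measure Ω) [IsProbabilityMeasure μ]
    {d : ℕ} (S : Matrix (Fin d) (Fin d) ℝ) (hS : S.PosSemidef)
    (hdiag : ∀ i, 0 < S i i)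
    (X : Ω → Fin d → ℝ) (hm : Measurable X)
    (hint : ∀ i j, Integrable (fun ω => |X ω i * X ω j|) μ)
    (α : ℝ) (hα : α ∈ Set.Ioo (0:ℝ) 1)
    (i : Fin d) (hzero : ∀ j, j ≠ i → S i j = 0)
    (e : Fin d → ℝ)
    (he : IsMinOn
      (fun x : Fin d → ℝ => ∫ ω,
        α * ((fun k => max (X ω k - x k) 0) ⬝ᵥ S.mulVec (fun k => max (X ω k - x k) 0))
        + (1-α) * ((fun k => max (x k - X ω k) 0) ⬝ᵥ
              S.mulVec (fun k => max (x k - X ω k) 0)) ∂μ)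
      Set.univ e)
    (ei : ℝ)
    (hei : α * ∫ ω, max (X ω i - ei) 0 ∂μ = (1-α) * ∫ ω, max (ei - X ω i) 0 ∂μ) :
    e i = ei := by
  have hsymm : S.IsSymm := isHermitian_iff_isSymm.1 hS.isHermitian
  have hX : ∀ k, MemLp (fun ω => X ω k) 2 μ := fun k =>
    memLp_two_of_integrable_abs_mul_self ((measurable_pi_apply k).comp hm).aestronglyMeasurable
      (hint k k)
  have hcoord : ∫ ω, expectileLoss α (X ω i) (e i) ∂μ ≤ ∫ ω, expectileLoss α (X ω i) ei ∂μ := by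
    have hmin : ∫ ω, sigmaExpectileLoss S α (X ω) e ∂μ
        ≤ ∫ ω, sigmaExpectileLoss S α (X ω) (update e i ei) ∂μ := he (Set.mem_univ _)
    rw [integral_sigmaExpectileLoss_update hsymm hzero hX] at hmin
    nlinarith [hdiag i]
  have hgrowth := integral_expectileLoss_add_sq_le (hX i) (min_le_left α (1 - α))
    (min_le_right α (1 - α)) hei (e i)
  have hmod : 0 < min α (1 - α) := lt_min hα.1 (sub_pos.2 hα.2)
  have hsq : (e i - ei) ^ 2 = 0 := le_antisymm (by nlinarith) (sq_nonneg _)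
  exact sub_eq_zero.1 (pow_eq_zero_iff two_ne_zero |>.1 hsq)

theorem sigma_expectile_independence_coordinate
    {Ω : Type*} [MeasurableSpace Ω] (μ : Measure Ω) [IsProbabilityMeasure μ]
    {d : ℕ} (S : Matrix (Fin d) (Fin d) ℝ) (hS : S.PosSemidef) (hpos : ∀ i j, 0 ≤ S i j)
    (hdiag : ∀ i, 0 < S i i)
    (X : Ω → Fin d → ℝ) (hm : Measurable X)
    (hint : ∀ i j, Integrable (fun ω => |X ω i * X ω j|) μ)
    (α : ℝ) (hα : α ∈ Set.Ioo (0:ℝ) 1)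
    (i : Fin d) (hzero : ∀ j, j ≠ i → S i j = 0)
    (e : Fin d → ℝ)
    (he : IsMinOn
      (fun x : Fin d → ℝ => ∫ ω,
        α * ((fun k => max (X ω k - x k) 0) ⬝ᵥ S.mulVec (fun k => max (X ω k - x k) 0))
        + (1-α) * ((fun k => max (x k - X ω k) 0) ⬝ᵥ
              S.mulVec (fun k => max (x k - X ω k) 0)) ∂μ)
      Set.univ e)
    (ei : ℝ)
    (hei : α * ∫ ω, max (X ω i - ei) 0 ∂μ = (1-α) * ∫ ω, max (ei - X ω i) 0 ∂μ) :
    e i = ei :=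
  sigma_expectile_independence_coordinate_general μ S hS hdiag X hm hint α hα i hzero e he ei hei
end

section
/- Asymptotic behavior: for an integrable random vector X in ℝ^d and a matrix Σ with all entries positive (satisfying the Σ-expectile construction assumptions), lim_{α→1} e_α^Σ(X) = (essSup(X₁),…,essSup(X_d)) and lim_{α→0} e_α^Σ(X) = (essInf(X₁),…,essInf(X_d)), componentwise. -/
/-!
Write the expected score as `α A(x) + (1 - α) B(x)` with `A(x) = E[(X - x)₊ᵀ Σ (X - x)₊]` and
`B(x) = E[(x - X)₊ᵀ Σ (x - X)₊]`. Since `Σ` has nonnegative entries, lowering `x k` to an a.s.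
upper bound `s` of `X k` leaves `A` unchanged and lowers `B` by at least `Σ k k (x k - s)²`, so
`e_α k ≤ essSup X k` for every `α`. Conversely, if `e_α k ≤ m < essSup X k` then
`A(e_α) ≥ Σ k k E[(X k - m)₊²] > 0`, while `A(t, …, t) → 0` as `t → ∞` by dominated convergence;
comparing with such a point shows that this is impossible once `α` is close to `1`. The limit at
`0` follows by applying this to `-X`, whose expectile at level `α` is `-e_{1-α}`.
-/

open MeasureTheory Matrix Filter Topology Set

section QuadraticForm

variable {ι : Type*} [Fintype ι] {S : Matrix ι ι ℝ}

lemma dotProduct_mulVec_self_eq_sum (S : Matrix ι ι ℝ) (v : ι → ℝ) :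
    v ⬝ᵥ S *ᵥ v = ∑ i, ∑ j, S i j * (v i * v j) := by
  simp only [dotProduct, mulVec, Finset.mul_sum]
  exact Finset.sum_congr rfl fun i _ => Finset.sum_congr rfl fun j _ => by ring

lemma dotProduct_mulVec_self_nonneg (hS : ∀ i j, 0 ≤ S i j) {v : ι → ℝ} (hv : 0 ≤ v) :
    0 ≤ v ⬝ᵥ S *ᵥ v := by
  rw [dotProduct_mulVec_self_eq_sum]
  exact Finset.sum_nonneg fun i _ => Finset.sum_nonneg fun j _ =>
    mul_nonneg (hS i j) (mul_nonneg (hv i) (hv j))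

lemma mul_sq_sub_sq_le_dotProduct_mulVec_self_sub (hS : ∀ i j, 0 ≤ S i j) {v w : ι → ℝ}
    (hw : 0 ≤ w) (hwv : w ≤ v) (k : ι) :
    S k k * (v k ^ 2 - w k ^ 2) ≤ v ⬝ᵥ S *ᵥ v - w ⬝ᵥ S *ᵥ w := by
  have hterm : ∀ i j, 0 ≤ S i j * (v i * v j) - S i j * (w i * w j) := fun i j =>
    sub_nonneg.2 <| mul_le_mul_of_nonneg_left
      (mul_le_mul (hwv i) (hwv j) (hw j) ((hw i).trans (hwv i))) (hS i j)
  simp only [dotProduct_mulVec_self_eq_sum, ← Finset.sum_sub_distrib]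
  calc S k k * (v k ^ 2 - w k ^ 2) = S k k * (v k * v k) - S k k * (w k * w k) := by ring
    _ ≤ ∑ j, (S k j * (v k * v j) - S k j * (w k * w j)) :=
      Finset.single_le_sum (fun j _ => hterm k j) (Finset.mem_univ k)
    _ ≤ ∑ i, ∑ j, (S i j * (v i * v j) - S i j * (w i * w j)) :=
      Finset.single_le_sum (f := fun i => ∑ j, (S i j * (v i * v j) - S i j * (w i * w j)))
        (fun i _ => Finset.sum_nonneg fun j _ => hterm i j) (Finset.mem_univ k)

end QuadraticForm

section Score

variable {ι : Type*} [Fintype ι] {S : Matrix ι ι ℝ}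

def expectileScore (S : Matrix ι ι ℝ) (α : ℝ) (y x : ι → ℝ) : ℝ :=
  α * ((y - x)⁺ ⬝ᵥ S *ᵥ (y - x)⁺) + (1 - α) * ((x - y)⁺ ⬝ᵥ S *ᵥ (x - y)⁺)

lemma expectileScore_neg (S : Matrix ι ι ℝ) (α : ℝ) (y x : ι → ℝ) :
    expectileScore S α (-y) (-x) = expectileScore S (1 - α) y x := by
  simp only [expectileScore, neg_sub_neg]
  ring

lemma mul_sq_posPart_sub_le_dotProduct_mulVec_self (hS : ∀ i j, 0 ≤ S i j) {y x : ι → ℝ}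
    {k : ι} {m : ℝ} (hxk : x k ≤ m) :
    S k k * (y k - m)⁺ ^ 2 ≤ (y - x)⁺ ⬝ᵥ S *ᵥ (y - x)⁺ := by
  have hdiag : S k k * (y - x)⁺ k ^ 2 ≤ (y - x)⁺ ⬝ᵥ S *ᵥ (y - x)⁺ := by
    simpa using mul_sq_sub_sq_le_dotProduct_mulVec_self_sub hS le_rfl (posPart_nonneg (y - x)) k
  have hmono : (y k - m)⁺ ≤ (y - x)⁺ k := posPart_mono (sub_le_sub_left hxk (y k))
  have hsq : (y k - m)⁺ ^ 2 ≤ (y - x)⁺ k ^ 2 := pow_le_pow_left₀ (posPart_nonneg _) hmono 2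
  exact (mul_le_mul_of_nonneg_left hsq (hS k k)).trans hdiag

lemma expectileScore_update_add_le [DecidableEq ι] (hS : ∀ i j, 0 ≤ S i j) {α : ℝ} (hα : α ≤ 1)
    {y x : ι → ℝ} {k : ι} {s : ℝ} (hy : y k ≤ s) (hs : s < x k) :
    expectileScore S α y (Function.update x k s) + (1 - α) * (S k k * (x k - s) ^ 2) ≤
      expectileScore S α y x := by
  have hup : (y - Function.update x k s)⁺ = (y - x)⁺ := by
    funext i
    rcases eq_or_ne i k with rfl | hi
    · simp [posPart_eq_zero.2 (sub_nonpos.2 hy), posPart_eq_zero.2 (by linarith : y i - x i ≤ 0)]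
    · simp [hi]
  have hle : (Function.update x k s - y)⁺ ≤ (x - y)⁺ := by
    refine posPart_mono fun i => ?_
    rcases eq_or_ne i k with rfl | hi
    · simpa only [Pi.sub_apply, Function.update_self, sub_le_sub_iff_right] using hs.le
    · simp only [Pi.sub_apply, Function.update_of_ne hi, le_refl]
  have hdiag := mul_sq_sub_sq_le_dotProduct_mulVec_self_sub hS (posPart_nonneg _) hle k
  have hxk : (x - y)⁺ k = x k - y k := posPart_eq_self.2 (sub_nonneg.2 (hy.trans hs.le))
  have hsk : (Function.update x k s - y)⁺ k = s - y k := by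
    rw [Pi.posPart_apply, Pi.sub_apply, Function.update_self]
    exact posPart_eq_self.2 (sub_nonneg.2 hy)
  rw [hxk, hsk] at hdiag
  have hgap : (x k - s) ^ 2 ≤ (x k - y k) ^ 2 - (s - y k) ^ 2 := by nlinarith
  have hdown := (mul_le_mul_of_nonneg_left hgap (hS k k)).trans hdiag
  simp only [expectileScore, hup]
  nlinarith [mul_le_mul_of_nonneg_left hdown (sub_nonneg.2 hα)]

end Score

lemma eventually_notMem_of_isMinOn_convexComb {E : Type*} {A B : E → ℝ} {e : ℝ → E} {T : Set E}
    {c : ℝ} {x : E}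
    (he : ∀ α ∈ Ioo (0 : ℝ) 1, IsMinOn (fun y => α * A y + (1 - α) * B y) univ (e α))
    (hB : ∀ y, 0 ≤ B y) (hT : ∀ y ∈ T, c ≤ A y) (hx : A x < c) :
    ∀ᶠ α in 𝓝[Ioo 0 1] 1, e α ∉ T := by
  have hlim : Tendsto (fun α : ℝ => α * A x + (1 - α) * B x - α * c) (𝓝 1) (𝓝 (A x - c)) := by
    have hcont : Continuous fun α : ℝ => α * A x + (1 - α) * B x - α * c := by fun_prop
    simpa using hcont.tendsto 1
  filter_upwards [nhdsWithin_le_nhds (hlim.eventually (gt_mem_nhds (sub_neg.2 hx))),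
    self_mem_nhdsWithin] with α hneg hα heT
  have hmin := isMinOn_iff.1 (he α hα) x (mem_univ x)
  have hAe : α * c ≤ α * A (e α) := mul_le_mul_of_nonneg_left (hT _ heT) hα.1.le
  have hBe : 0 ≤ (1 - α) * B (e α) := mul_nonneg (sub_nonneg.2 hα.2.le) (hB _)
  linarith

section Integrability

variable {Ω : Type*} [MeasurableSpace Ω] {μ : Measure Ω}

lemma posPart_sub_le_abs_add_abs (a b : ℝ) : (a - b)⁺ ≤ |a| + |b| :=
  max_le (by linarith [le_abs_self a, neg_abs_le b]) (by positivity)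

lemma integrable_posPart_sub_mul_posPart_sub [IsFiniteMeasure μ] {f g : Ω → ℝ}
    (hf : Integrable f μ) (hg : Integrable g μ) (hfg : Integrable (f * g) μ) (a b : ℝ) :
    Integrable (fun ω => (f ω - a)⁺ * (g ω - b)⁺) μ := by
  refine Integrable.mono' (((hfg.abs.add (hf.abs.const_mul |b|)).add (hg.abs.const_mul |a|)).add
    (integrable_const (|a| * |b|)))
    (by have := hf.aestronglyMeasurable; have := hg.aestronglyMeasurable; fun_prop)
    (Eventually.of_forall fun ω => ?_)
  have hfa := posPart_sub_le_abs_add_abs (f ω) a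
  have hgb := posPart_sub_le_abs_add_abs (g ω) b
  rw [Real.norm_eq_abs, abs_of_nonneg (mul_nonneg (posPart_nonneg _) (posPart_nonneg _))]
  calc (f ω - a)⁺ * (g ω - b)⁺ ≤ (|f ω| + |a|) * (|g ω| + |b|) :=
        mul_le_mul hfa hgb (posPart_nonneg _) (by positivity)
    _ = _ := by simp only [Pi.add_apply, Pi.mul_apply, abs_mul]; ring

lemma tendsto_integral_posPart_sub_mul_posPart_sub_atTop {f g : Ω → ℝ}
    (hf : AEStronglyMeasurable f μ) (hg : AEStronglyMeasurable g μ) (hfg : Integrable (f * g) μ) :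
    Tendsto (fun t : ℝ => ∫ ω, (f ω - t)⁺ * (g ω - t)⁺ ∂μ) atTop (𝓝 0) := by
  have hpos_le : ∀ {t : ℝ} (a : ℝ), 0 ≤ t → (a - t)⁺ ≤ |a| := fun a ht =>
    max_le (by linarith [le_abs_self a]) (abs_nonneg a)
  simpa using tendsto_integral_filter_of_dominated_convergence (fun ω => |(f * g) ω|)
    (F := fun t ω => (f ω - t)⁺ * (g ω - t)⁺) (f := fun _ => 0)
    (Eventually.of_forall fun t => by fun_prop)
    ((eventually_ge_atTop 0).mono fun t ht => Eventually.of_forall fun ω => by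
      rw [Real.norm_eq_abs, abs_of_nonneg (mul_nonneg (posPart_nonneg _) (posPart_nonneg _)),
        Pi.mul_apply, abs_mul]
      exact mul_le_mul (hpos_le _ ht) (hpos_le _ ht) (posPart_nonneg _) (abs_nonneg _))
    hfg.abs
    (Eventually.of_forall fun ω => tendsto_const_nhds.congr' <|
      (eventually_ge_atTop (max (f ω) (g ω))).mono fun t ht => by
        simp [posPart_eq_zero.2 (sub_nonpos.2 ((le_max_left _ _).trans ht))])

lemma integral_sq_posPart_sub_pos {f : Ω → ℝ}
    {m : ℝ} (hf : Integrable (fun ω => (f ω - m)⁺ ^ 2) μ)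
    (hm : (m : EReal) < essSup (fun ω => (f ω : EReal)) μ) :
    0 < ∫ ω, (f ω - m)⁺ ^ 2 ∂μ := by
  have hfreq : ∃ᶠ ω in ae μ, (m : EReal) < f ω :=
    frequently_lt_of_lt_limsup (by isBoundedDefault) hm
  have hmeas : μ {ω | m < f ω} ≠ 0 := by simpa using frequently_ae_iff.1 hfreq
  rw [integral_pos_iff_support_of_nonneg (fun ω => sq_nonneg _) hf]
  refine (pos_iff_ne_zero.2 hmeas).trans_le (measure_mono fun ω (hω : m < f ω) => ?_)
  simpa [Function.mem_support, posPart_eq_zero] using hω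

end Integrability

section RandomVector

variable {Ω : Type*} [MeasurableSpace Ω] {μ : Measure Ω} {ι : Type*} [Fintype ι]
  {S : Matrix ι ι ℝ} {X : Ω → ι → ℝ}

lemma integrable_dotProduct_mulVec_posPart_sub_const [IsFiniteMeasure μ]
    (hX : ∀ i, Integrable (fun ω => X ω i) μ)
    (hXX : ∀ i j, Integrable (fun ω => X ω i * X ω j) μ) (x : ι → ℝ) :
    Integrable (fun ω => (X ω - x)⁺ ⬝ᵥ S *ᵥ (X ω - x)⁺) μ := by
  simp only [dotProduct_mulVec_self_eq_sum, Pi.posPart_apply, Pi.sub_apply]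
  exact integrable_finsetSum _ fun i _ => integrable_finsetSum _ fun j _ =>
    (integrable_posPart_sub_mul_posPart_sub (hX i) (hX j) (hXX i j) (x i) (x j)).const_mul _

lemma integrable_dotProduct_mulVec_posPart_const_sub [IsFiniteMeasure μ]
    (hX : ∀ i, Integrable (fun ω => X ω i) μ)
    (hXX : ∀ i j, Integrable (fun ω => X ω i * X ω j) μ) (x : ι → ℝ) :
    Integrable (fun ω => (x - X ω)⁺ ⬝ᵥ S *ᵥ (x - X ω)⁺) μ := by
  simpa only [Pi.neg_apply, neg_sub_neg] using
    integrable_dotProduct_mulVec_posPart_sub_const (S := S) (X := -X) (fun i => (hX i).neg)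
      (fun i j => by simpa using hXX i j) (-x)

lemma integrable_expectileScore [IsFiniteMeasure μ] (hX : ∀ i, Integrable (fun ω => X ω i) μ)
    (hXX : ∀ i j, Integrable (fun ω => X ω i * X ω j) μ) (α : ℝ) (x : ι → ℝ) :
    Integrable (fun ω => expectileScore S α (X ω) x) μ :=
  ((integrable_dotProduct_mulVec_posPart_sub_const hX hXX x).const_mul α).add
    ((integrable_dotProduct_mulVec_posPart_const_sub hX hXX x).const_mul (1 - α))

lemma integral_expectileScore [IsFiniteMeasure μ] (hX : ∀ i, Integrable (fun ω => X ω i) μ)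
    (hXX : ∀ i j, Integrable (fun ω => X ω i * X ω j) μ) (α : ℝ) (x : ι → ℝ) :
    ∫ ω, expectileScore S α (X ω) x ∂μ =
      α * ∫ ω, (X ω - x)⁺ ⬝ᵥ S *ᵥ (X ω - x)⁺ ∂μ +
        (1 - α) * ∫ ω, (x - X ω)⁺ ⬝ᵥ S *ᵥ (x - X ω)⁺ ∂μ := by
  rw [← integral_const_mul, ← integral_const_mul, ← integral_add
    ((integrable_dotProduct_mulVec_posPart_sub_const hX hXX x).const_mul α)
    ((integrable_dotProduct_mulVec_posPart_const_sub hX hXX x).const_mul (1 - α))]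
  rfl

lemma tendsto_integral_dotProduct_mulVec_posPart_sub_const_atTop [IsFiniteMeasure μ]
    (hX : ∀ i, Integrable (fun ω => X ω i) μ)
    (hXX : ∀ i j, Integrable (fun ω => X ω i * X ω j) μ) :
    Tendsto (fun t : ℝ => ∫ ω, (X ω - fun _ => t)⁺ ⬝ᵥ S *ᵥ (X ω - fun _ => t)⁺ ∂μ)
      atTop (𝓝 0) := by
  have hint : ∀ (t : ℝ) i j, Integrable (fun ω => S i j * ((X ω i - t)⁺ * (X ω j - t)⁺)) μ :=
    fun t i j => (integrable_posPart_sub_mul_posPart_sub (hX i) (hX j) (hXX i j) t t).const_mul _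
  have hsum : ∀ t : ℝ, ∫ ω, (X ω - fun _ => t)⁺ ⬝ᵥ S *ᵥ (X ω - fun _ => t)⁺ ∂μ =
      ∑ i, ∑ j, S i j * ∫ ω, (X ω i - t)⁺ * (X ω j - t)⁺ ∂μ := fun t => by
    simp only [dotProduct_mulVec_self_eq_sum]
    calc _ = ∑ i, ∫ ω, ∑ j, S i j * ((X ω i - t)⁺ * (X ω j - t)⁺) ∂μ :=
          integral_finsetSum _ fun i _ => integrable_finsetSum _ fun j _ => hint t i j
      _ = _ := Finset.sum_congr rfl fun i _ => by
          rw [integral_finsetSum _ fun j _ => hint t i j]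
          simp only [integral_const_mul]
  simp only [hsum]
  simpa using tendsto_finsetSum _ fun i _ => tendsto_finsetSum _ fun j _ =>
    (tendsto_integral_posPart_sub_mul_posPart_sub_atTop (hX i).aestronglyMeasurable
      (hX j).aestronglyMeasurable (hXX i j)).const_mul (S i j)

variable (μ S X) in
def IsExpectile (α : ℝ) (x : ι → ℝ) : Prop :=
  IsMinOn (fun y => ∫ ω, expectileScore S α (X ω) y ∂μ) univ x

lemma IsExpectile.neg {α : ℝ} {x : ι → ℝ} (h : IsExpectile μ S X (1 - α) x) :
    IsExpectile μ S (-X) α (-x) := by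
  have hscore : ∀ y, ∫ ω, expectileScore S α ((-X) ω) y ∂μ =
      ∫ ω, expectileScore S (1 - α) (X ω) (-y) ∂μ := fun y => by
    simp only [← expectileScore_neg, neg_neg, Pi.neg_apply]
  refine isMinOn_iff.2 fun y _ => ?_
  simp only [hscore, neg_neg]
  exact isMinOn_iff.1 h (-y) (mem_univ _)

end RandomVector

section Expectile

variable {Ω : Type*} [MeasurableSpace Ω] {μ : Measure Ω} [IsProbabilityMeasure μ]
  {ι : Type*} [Fintype ι] {S : Matrix ι ι ℝ} {X : Ω → ι → ℝ} {e : ℝ → ι → ℝ}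

lemma eventually_lt_expectile (hS : ∀ i j, 0 ≤ S i j) {k : ι} (hSk : 0 < S k k)
    (hX : ∀ i, Integrable (fun ω => X ω i) μ)
    (hXX : ∀ i j, Integrable (fun ω => X ω i * X ω j) μ)
    (he : ∀ α ∈ Ioo (0 : ℝ) 1, IsExpectile μ S X α (e α))
    {m : ℝ} (hm : (m : EReal) < essSup (fun ω => (X ω k : EReal)) μ) :
    ∀ᶠ α in 𝓝[Ioo 0 1] 1, m < e α k := by
  have hsq : Integrable (fun ω => (X ω k - m)⁺ ^ 2) μ := by
    simpa only [sq] using integrable_posPart_sub_mul_posPart_sub (hX k) (hX k) (hXX k k) m m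
  have hc : 0 < S k k * ∫ ω, (X ω k - m)⁺ ^ 2 ∂μ :=
    mul_pos hSk (integral_sq_posPart_sub_pos hsq hm)
  have hT : ∀ x ∈ {x : ι → ℝ | x k ≤ m},
      S k k * ∫ ω, (X ω k - m)⁺ ^ 2 ∂μ ≤ ∫ ω, (X ω - x)⁺ ⬝ᵥ S *ᵥ (X ω - x)⁺ ∂μ :=
    fun x hx => by
      rw [← integral_const_mul]
      exact integral_mono (hsq.const_mul _)
        (integrable_dotProduct_mulVec_posPart_sub_const hX hXX x)
        fun ω => mul_sq_posPart_sub_le_dotProduct_mulVec_self hS hx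
  obtain ⟨t, ht⟩ := ((tendsto_integral_dotProduct_mulVec_posPart_sub_const_atTop (S := S) hX
    hXX).eventually (gt_mem_nhds hc)).exists
  have he' : ∀ α ∈ Ioo (0 : ℝ) 1, IsMinOn (fun x => α * ∫ ω, (X ω - x)⁺ ⬝ᵥ S *ᵥ (X ω - x)⁺ ∂μ +
      (1 - α) * ∫ ω, (x - X ω)⁺ ⬝ᵥ S *ᵥ (x - X ω)⁺ ∂μ) univ (e α) := fun α hα => by
    simpa only [IsExpectile, integral_expectileScore hX hXX] using he α hα
  filter_upwards [eventually_notMem_of_isMinOn_convexComb he' (fun x => integral_nonneg fun ω =>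
    dotProduct_mulVec_self_nonneg hS (posPart_nonneg _)) hT ht] with α hα
  exact lt_of_not_ge hα

lemma expectile_le_of_ae_le [DecidableEq ι] (hS : ∀ i j, 0 ≤ S i j) {k : ι} (hSk : 0 < S k k)
    (hX : ∀ i, Integrable (fun ω => X ω i) μ)
    (hXX : ∀ i j, Integrable (fun ω => X ω i * X ω j) μ)
    (he : ∀ α ∈ Ioo (0 : ℝ) 1, IsExpectile μ S X α (e α))
    {s : ℝ} (hs : ∀ᵐ ω ∂μ, X ω k ≤ s) {α : ℝ} (hα : α ∈ Ioo (0 : ℝ) 1) :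
    e α k ≤ s := by
  by_contra! hlt
  have hdecrease : ∫ ω, expectileScore S α (X ω) (Function.update (e α) k s) ∂μ +
      (1 - α) * (S k k * (e α k - s) ^ 2) ≤ ∫ ω, expectileScore S α (X ω) (e α) ∂μ := by
    have hint := integrable_expectileScore (S := S) hX hXX α (Function.update (e α) k s)
    have hmono := integral_mono_ae (hint.add (integrable_const _))
      (integrable_expectileScore hX hXX α (e α))
      (hs.mono fun ω hω => expectileScore_update_add_le hS hα.2.le hω hlt)
    rwa [integral_add' hint (integrable_const _), integral_const, probReal_univ, one_smul]
      at hmono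
  have hmin := isMinOn_iff.1 (he α hα) (Function.update (e α) k s) (mem_univ _)
  have hgap : 0 < (1 - α) * (S k k * (e α k - s) ^ 2) :=
    mul_pos (sub_pos.2 hα.2) (mul_pos hSk (pow_pos (sub_pos.2 hlt) 2))
  linarith

lemma expectile_le_essSup [DecidableEq ι] (hS : ∀ i j, 0 ≤ S i j) {k : ι} (hSk : 0 < S k k)
    (hX : ∀ i, Integrable (fun ω => X ω i) μ)
    (hXX : ∀ i j, Integrable (fun ω => X ω i * X ω j) μ)
    (he : ∀ α ∈ Ioo (0 : ℝ) 1, IsExpectile μ S X α (e α))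
    {α : ℝ} (hα : α ∈ Ioo (0 : ℝ) 1) :
    (e α k : EReal) ≤ essSup (fun ω => (X ω k : EReal)) μ := by
  by_contra! h
  obtain ⟨s, hs, hse⟩ := EReal.lt_iff_exists_real_btwn.1 h
  have hae : ∀ᵐ ω ∂μ, X ω k ≤ s :=
    (ae_lt_of_essSup_lt hs).mono fun ω hω => (EReal.coe_lt_coe_iff.1 hω).le
  exact (expectile_le_of_ae_le hS hSk hX hXX he hae hα).not_gt (EReal.coe_lt_coe_iff.1 hse)

theorem tendsto_expectile_essSup [DecidableEq ι] (hS : ∀ i j, 0 ≤ S i j) {k : ι}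
    (hSk : 0 < S k k) (hX : ∀ i, Integrable (fun ω => X ω i) μ)
    (hXX : ∀ i j, Integrable (fun ω => X ω i * X ω j) μ)
    (he : ∀ α ∈ Ioo (0 : ℝ) 1, IsExpectile μ S X α (e α)) :
    Tendsto (fun α => (e α k : EReal)) (𝓝[Ioo 0 1] 1)
      (𝓝 (essSup (fun ω => (X ω k : EReal)) μ)) := by
  refine tendsto_order.2 ⟨fun a ha => ?_, fun a ha => ?_⟩
  · obtain ⟨m, ham, hm⟩ := EReal.lt_iff_exists_real_btwn.1 ha
    filter_upwards [eventually_lt_expectile hS hSk hX hXX he hm] with α hα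
    exact ham.trans (EReal.coe_lt_coe_iff.2 hα)
  · filter_upwards [self_mem_nhdsWithin] with α hα
    exact (expectile_le_essSup hS hSk hX hXX he hα).trans_lt ha

theorem tendsto_expectile_essInf [DecidableEq ι] (hS : ∀ i j, 0 ≤ S i j) {k : ι}
    (hSk : 0 < S k k) (hX : ∀ i, Integrable (fun ω => X ω i) μ)
    (hXX : ∀ i j, Integrable (fun ω => X ω i * X ω j) μ)
    (he : ∀ α ∈ Ioo (0 : ℝ) 1, IsExpectile μ S X α (e α)) :
    Tendsto (fun α => (e α k : EReal)) (𝓝[Ioo 0 1] 0)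
      (𝓝 (essInf (fun ω => (X ω k : EReal)) μ)) := by
  have hflip : ∀ α ∈ Ioo (0 : ℝ) 1, 1 - α ∈ Ioo (0 : ℝ) 1 :=
    fun α hα => ⟨sub_pos.2 hα.2, sub_lt_self _ hα.1⟩
  have hsup := tendsto_expectile_essSup (X := -X) (e := fun α => -e (1 - α)) hS hSk
    (fun i => (hX i).neg) (fun i j => by simpa using hXX i j)
    fun α hα => (he _ (hflip α hα)).neg
  have hone_sub : Tendsto (fun α : ℝ => 1 - α) (𝓝[Ioo 0 1] 0) (𝓝[Ioo 0 1] 1) :=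
    tendsto_nhdsWithin_iff.2 ⟨((continuous_const.sub continuous_id).tendsto' 0 1 (by norm_num))
      |>.mono_left nhdsWithin_le_nhds, eventually_nhdsWithin_of_forall hflip⟩
  have hessSup : essSup (fun ω => ((-X) ω k : EReal)) μ = -essInf (fun ω => (X ω k : EReal)) μ := by
    simp only [Pi.neg_apply, EReal.coe_neg]
    exact EReal.limsup_neg
  have hinf := (continuous_neg.tendsto _).comp (hsup.comp hone_sub)
  rw [hessSup, neg_neg] at hinf
  simpa [Function.comp_def] using hinf

end Expectile

theorem sigma_expectile_asymptotic_general
    {Ω : Type*} [MeasurableSpace Ω] (μ : Measure Ω) [IsProbabilityMeasure μ]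
    {d : ℕ} (S : Matrix (Fin d) (Fin d) ℝ)
    (hpos : ∀ i j, 0 < S i j)
    (X : Ω → Fin d → ℝ) (hm : Measurable X)
    (hint1 : ∀ i, Integrable (fun ω => |X ω i|) μ)
    (hint : ∀ i j, Integrable (fun ω => |X ω i * X ω j|) μ)
    (e : ℝ → Fin d → ℝ)
    (he : ∀ α ∈ Set.Ioo (0:ℝ) 1, IsMinOn
      (fun x : Fin d → ℝ => ∫ ω,
        α * ((fun k => max (X ω k - x k) 0) ⬝ᵥ S.mulVec (fun k => max (X ω k - x k) 0))
        + (1-α) * ((fun k => max (x k - X ω k) 0) ⬝ᵥ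
              S.mulVec (fun k => max (x k - X ω k) 0)) ∂μ)
      Set.univ (e α)) :
    ∀ k, Tendsto (fun α => ((e α k : ℝ) : EReal)) (nhdsWithin 1 (Set.Ioo (0:ℝ) 1))
           (nhds (essSup (fun ω => (X ω k : EReal)) μ)) ∧
         Tendsto (fun α => ((e α k : ℝ) : EReal)) (nhdsWithin 0 (Set.Ioo (0:ℝ) 1))
           (nhds (essInf (fun ω => (X ω k : EReal)) μ)) := by
  have hXk : ∀ i, Measurable fun ω => X ω i := fun i => (measurable_pi_apply i).comp hm
  have hX : ∀ i, Integrable (fun ω => X ω i) μ := fun i =>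
    (integrable_norm_iff (hXk i).aestronglyMeasurable).1 (hint1 i)
  have hXX : ∀ i j, Integrable (fun ω => X ω i * X ω j) μ := fun i j =>
    (integrable_norm_iff ((hXk i).mul (hXk j)).aestronglyMeasurable).1 (hint i j)
  have hS : ∀ i j, 0 ≤ S i j := fun i j => (hpos i j).le
  exact fun k => ⟨tendsto_expectile_essSup hS (hpos k k) hX hXX he,
    tendsto_expectile_essInf hS (hpos k k) hX hXX he⟩

theorem sigma_expectile_asymptotic
    {Ω : Type*} [MeasurableSpace Ω] (μ : Measure Ω) [IsProbabilityMeasure μ]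
    {d : ℕ} (S : Matrix (Fin d) (Fin d) ℝ) (hS : S.PosDef)
    (hpos : ∀ i j, 0 < S i j) (hdom : ∀ i j, S i j ≤ S i i)
    (X : Ω → Fin d → ℝ) (hm : Measurable X)
    (hint1 : ∀ i, Integrable (fun ω => |X ω i|) μ)
    (hint : ∀ i j, Integrable (fun ω => |X ω i * X ω j|) μ)
    (e : ℝ → Fin d → ℝ)
    (he : ∀ α ∈ Set.Ioo (0:ℝ) 1, IsMinOn
      (fun x : Fin d → ℝ => ∫ ω,
        α * ((fun k => max (X ω k - x k) 0) ⬝ᵥ S.mulVec (fun k => max (X ω k - x k) 0))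
        + (1-α) * ((fun k => max (x k - X ω k) 0) ⬝ᵥ
              S.mulVec (fun k => max (x k - X ω k) 0)) ∂μ)
      Set.univ (e α)) :
    ∀ k, Tendsto (fun α => ((e α k : ℝ) : EReal)) (nhdsWithin 1 (Set.Ioo (0:ℝ) 1))
           (nhds (essSup (fun ω => (X ω k : EReal)) μ)) ∧
         Tendsto (fun α => ((e α k : ℝ) : EReal)) (nhdsWithin 0 (Set.Ioo (0:ℝ) 1))
           (nhds (essInf (fun ω => (X ω k : EReal)) μ)) :=
  sigma_expectile_asymptotic_general μ S hpos X hm hint1 hint e he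
end
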